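/- The 8-dimensional algebra W(2)-tilde with basis e_1,...,e_8 and nonzero products e_1e_1=-e_1, e_1e_2=-3e_2, e_1e_3=e_3, e_1e_4=3e_4, e_1e_5=-e_5, e_1e_6=e_6, e_1e_7=e_7, e_1e_8=-e_8, e_2e_1=3e_2, e_2e_4=e_3, e_2e_6=-e_5, e_2e_7=e_8, e_3e_1=-2e_3, e_6e_1=2e_3, e_7e_1=2e_3 is terminal but is neither a (left) Leibniz algebra nor a Jordan algebra. -/

import Mathlib

def tbl (F : Type*) [Field F] : Fin 8 → Fin 8 → Fin 8 → F :=
  ![![![-1, 0, 0, 0, 0, 0, 0, 0], ![0, -3, 0, 0, 0, 0, 0, 0], ![0, 0, 1, 0, 0, 0, 0, 0], ![0, 0, 0, 3, 0, 0, 0, 0], ![0, 0, 0, 0, -1, 0, 0, 0], ![0, 0, 0, 0, 0, 1, 0, 0], ![0, 0, 0, 0, 0, 0, 1, 0], ![0, 0, 0, 0, 0, 0, 0, -1]],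
    ![![0, 3, 0, 0, 0, 0, 0, 0], ![0, 0, 0, 0, 0, 0, 0, 0], ![0, 0, 0, 0, 0, 0, 0, 0], ![0, 0, 1, 0, 0, 0, 0, 0], ![0, 0, 0, 0, 0, 0, 0, 0], ![0, 0, 0, 0, -1, 0, 0, 0], ![0, 0, 0, 0, 0, 0, 0, 1], ![0, 0, 0, 0, 0, 0, 0, 0]],
    ![![0, 0, -2, 0, 0, 0, 0, 0], ![0, 0, 0, 0, 0, 0, 0, 0], ![0, 0, 0, 0, 0, 0, 0, 0], ![0, 0, 0, 0, 0, 0, 0, 0], ![0, 0, 0, 0, 0, 0, 0, 0], ![0, 0, 0, 0, 0, 0, 0, 0], ![0, 0, 0, 0, 0, 0, 0, 0], ![0, 0, 0, 0, 0, 0, 0, 0]],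
    ![![0, 0, 0, 0, 0, 0, 0, 0], ![0, 0, 0, 0, 0, 0, 0, 0], ![0, 0, 0, 0, 0, 0, 0, 0], ![0, 0, 0, 0, 0, 0, 0, 0], ![0, 0, 0, 0, 0, 0, 0, 0], ![0, 0, 0, 0, 0, 0, 0, 0], ![0, 0, 0, 0, 0, 0, 0, 0], ![0, 0, 0, 0, 0, 0, 0, 0]],
    ![![0, 0, 0, 0, 0, 0, 0, 0], ![0, 0, 0, 0, 0, 0, 0, 0], ![0, 0, 0, 0, 0, 0, 0, 0], ![0, 0, 0, 0, 0, 0, 0, 0], ![0, 0, 0, 0, 0, 0, 0, 0], ![0, 0, 0, 0, 0, 0, 0, 0], ![0, 0, 0, 0, 0, 0, 0, 0], ![0, 0, 0, 0, 0, 0, 0, 0]],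
    ![![0, 0, 2, 0, 0, 0, 0, 0], ![0, 0, 0, 0, 0, 0, 0, 0], ![0, 0, 0, 0, 0, 0, 0, 0], ![0, 0, 0, 0, 0, 0, 0, 0], ![0, 0, 0, 0, 0, 0, 0, 0], ![0, 0, 0, 0, 0, 0, 0, 0], ![0, 0, 0, 0, 0, 0, 0, 0], ![0, 0, 0, 0, 0, 0, 0, 0]],
    ![![0, 0, 2, 0, 0, 0, 0, 0], ![0, 0, 0, 0, 0, 0, 0, 0], ![0, 0, 0, 0, 0, 0, 0, 0], ![0, 0, 0, 0, 0, 0, 0, 0], ![0, 0, 0, 0, 0, 0, 0, 0], ![0, 0, 0, 0, 0, 0, 0, 0], ![0, 0, 0, 0, 0, 0, 0, 0], ![0, 0, 0, 0, 0, 0, 0, 0]],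
    ![![0, 0, 0, 0, 0, 0, 0, 0], ![0, 0, 0, 0, 0, 0, 0, 0], ![0, 0, 0, 0, 0, 0, 0, 0], ![0, 0, 0, 0, 0, 0, 0, 0], ![0, 0, 0, 0, 0, 0, 0, 0], ![0, 0, 0, 0, 0, 0, 0, 0], ![0, 0, 0, 0, 0, 0, 0, 0], ![0, 0, 0, 0, 0, 0, 0, 0]]]

def mul (F : Type*) [Field F] (x y : Fin 8 → F) : Fin 8 → F :=
  fun k => ∑ i, ∑ j, x i * y j * tbl F i j k

/-- The associated multiplication of a terminal algebra: `F(a,b) = (1/3)(2ab+ba)`. -/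
def termF (F : Type*) [Field F] (a b : Fin 8 → F) : Fin 8 → F :=
  (3 : F)⁻¹ • ((2 : F) • mul F a b + mul F b a)

/-!
Writing `e_{i+1}` for `Pi.single i 1`, the structure constants give the product in coordinates
(`mul_eq`). Each coordinate of the terminal identity is then a polynomial identity in the
coordinates of `a, b, x, y`. Since `e₁e₁ = -e₁`, the Leibniz identity for `(e₁, e₁, e₁)` reads
`e₁ = 2e₁`; and `e₁e₂ = -3e₂ ≠ 3e₂ = e₂e₁` in characteristic zero, so the algebra is not
commutative, let alone Jordan.
-/

section

variable {F : Type*} [Field F]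

theorem mul_eq (x y : Fin 8 → F) :
    mul F x y = ![-(x 0 * y 0), 3 * (x 1 * y 0 - x 0 * y 1),
      x 0 * y 2 + x 1 * y 3 + 2 * (x 5 + x 6 - x 2) * y 0, 3 * x 0 * y 3,
      -(x 0 * y 4 + x 1 * y 5), x 0 * y 5, x 0 * y 6, x 1 * y 6 - x 0 * y 7] := by
  ext k
  fin_cases k <;>
    simp only [mul, tbl, Fin.sum_univ_eight, Fin.reduceFinMk, Fin.isValue, Matrix.cons_val] <;>
    ring

theorem mul_terminal_identity [CharZero F] (a b x y : Fin 8 → F) :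
    mul F b (mul F a (mul F x y) - mul F (mul F a x) y - mul F x (mul F a y))
        - mul F a (mul F (mul F b x) y) + mul F (mul F a (mul F b x)) y
        + mul F (mul F b x) (mul F a y) - mul F a (mul F x (mul F b y))
        + mul F (mul F a x) (mul F b y) + mul F x (mul F a (mul F b y))
      = - mul F (termF F a b) (mul F x y) + mul F (mul F (termF F a b) x) y
        + mul F x (mul F (termF F a b) y) := by
  ext k
  fin_cases k <;>
    simp only [termF, mul_eq, Pi.add_apply, Pi.sub_apply, Pi.neg_apply, Pi.smul_apply, smul_eq_mul,
      Fin.reduceFinMk, Fin.isValue, Matrix.cons_val] <;>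
    ring

theorem mul_not_leftLeibniz :
    ¬ ∀ x y z : Fin 8 → F, mul F x (mul F y z) = mul F (mul F x y) z + mul F y (mul F x z) := by
  intro h
  have h0 := congrFun (h (Pi.single 0 1) (Pi.single 0 1) (Pi.single 0 1)) 0
  simp [mul_eq] at h0

theorem mul_not_comm [CharZero F] : ¬ ∀ x y : Fin 8 → F, mul F x y = mul F y x := by
  intro h
  have h1 := congrFun (h (Pi.single 0 1) (Pi.single 1 1)) 1
  norm_num [mul_eq] at h1

end

/-- `W(2)`-tilde is a terminal algebra which is neither left Leibniz nor Jordan. -/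
theorem W2tilde_terminal_nonLeibniz_nonJordan (F : Type*) [Field F] [CharZero F] :
    (∀ a b x y : Fin 8 → F,
      mul F b (mul F a (mul F x y) - mul F (mul F a x) y - mul F x (mul F a y)) - mul F a (mul F (mul F b x) y) + mul F (mul F a (mul F b x)) y + mul F (mul F b x) (mul F a y) - mul F a (mul F x (mul F b y)) + mul F (mul F a x) (mul F b y) + mul F x (mul F a (mul F b y))
        = - mul F (termF F a b) (mul F x y) + mul F (mul F (termF F a b) x) y + mul F x (mul F (termF F a b) y)) ∧
    ¬ (∀ x y z : Fin 8 → F, mul F x (mul F y z) = mul F (mul F x y) z + mul F y (mul F x z)) ∧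
    ¬ ((∀ x y : Fin 8 → F, mul F x y = mul F y x) ∧
        ∀ x y : Fin 8 → F, mul F (mul F (mul F x x) y) x = mul F (mul F x x) (mul F y x)) :=
  ⟨mul_terminal_identity, mul_not_leftLeibniz, fun hJordan => mul_not_comm hJordan.1⟩
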